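/- arXiv:2406.12049 — 5 statements merged into one kernel-verified Lean document; each statement's English description precedes it below -/
import Mathlib

section
/- The two-variable formal power series identity (-q;q)_∞ (1 - q + zq) = 1 + zq + Σ_{m≥2} (1+q)(1+q^2)⋯(1+q^{m-2}) q^m (z + q^{m-1}) holds. -/
open Finset PowerSeries

/-- The Andrews–Garvan crank of a multiset of parts: the largest part if there
are no ones, otherwise (number of parts larger than the number of ones) minus
(number of ones). -/
def crankM (s : Multiset ℕ) : ℤ :=
  if 1 ∈ s then
    ((s.filter fun x => Multiset.count 1 s < x).card : ℤ) - Multiset.count 1 s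
  else (s.sup : ℤ)

/-- The Andrews–Garvan crank of a partition. -/
def crank {n : ℕ} (p : n.Partition) : ℤ := crankM p.parts

/-- `M(m,n)`: the number of partitions of `n` with crank `m`. -/
def crankCount (n : ℕ) (m : ℤ) : ℕ :=
  ((Finset.univ : Finset n.Partition).filter fun p => crank p = m).card

/-- The Laurent polynomial ring `ℤ[z,z⁻¹]` of the crank variable. -/
abbrev L : Type := LaurentPolynomial ℤ

/-- The crank variable `z`. -/
noncomputable def Z : L := LaurentPolynomial.T 1

/-- `z⁻¹`. -/
noncomputable def Zi : L := LaurentPolynomial.T (-1)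

lemma dist_times_linear_expansion_aux (N : ℕ) :
    (∏ k ∈ Icc 1 N, (1 + (X : PowerSeries L) ^ k)) * (1 - X + C Z * X)
      + X ^ (N + 1) * ((∏ k ∈ Icc 1 N, (1 + (X : PowerSeries L) ^ k))
          * (1 + C Z * X + X ^ (N + 2)))
    = 1 + C Z * X +
        ∑ m ∈ Icc 2 (N + 2),
          (∏ k ∈ Icc 1 (m - 2), (1 + (X : PowerSeries L) ^ k)) * X ^ m *
            (C Z + X ^ (m - 1)) := by
  induction N with
  | zero => simp; ring
  | succ n ih =>
    rw [show n + 1 + 2 = (n + 2) + 1 by ring, Finset.sum_Icc_succ_top (by omega)]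
    simp only [show n + 2 + 1 - 2 = n + 1 by omega, show n + 2 + 1 - 1 = n + 2 by omega,
      show n + 2 + 1 = n + 3 by omega,
      Finset.prod_Icc_succ_top (show 1 ≤ n + 1 by omega)]
    linear_combination ih

/-- `(-q;q)∞ (1 - q + zq) = 1 + zq + Σ_{m≥2} (1+q)⋯(1+q^{m-2}) qᵐ (z + q^{m-1})`,
as formal power series in `q` over `ℤ[z,z⁻¹]` (coefficients of `qⁿ` computed
with any truncation `N ≥ n`). -/
theorem dist_times_linear_expansion :
    ∀ N n : ℕ, n ≤ N →
      PowerSeries.coeff (R := L) n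
        ((∏ k ∈ Icc 1 N, (1 + (X : PowerSeries L) ^ k)) * (1 - X + C Z * X)) =
      PowerSeries.coeff (R := L) n
        (1 + C Z * X +
          ∑ m ∈ Icc 2 (N + 2),
            (∏ k ∈ Icc 1 (m - 2), (1 + (X : PowerSeries L) ^ k)) * X ^ m *
              (C Z + X ^ (m - 1))) := by
  intro N n hn
  rw [← dist_times_linear_expansion_aux N, map_add, mul_comm (X ^ (N + 1)),
    PowerSeries.coeff_mul_X_pow', if_neg (by omega), add_zero]
end

section
/- Define λ on partitions into distinct parts by: λ(π) = 0 if π is empty or if both ℓ(π) and ℓ(π)-1 are parts of π, and λ(π) = 1 otherwise (including when π has exactly one part). Then (-q;q)_∞ (1 - q + zq) = Σ_{π ∈ PD} z^{λ(π)} q^{|π|}, where PD is the set of partitions into distinct parts and |π| is the sum of parts. -/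
open Finset PowerSeries

/-- `λ(π)` for a partition `π` into distinct parts: `0` if `π` is empty or both
the largest part `ℓ(π)` and `ℓ(π)-1` are parts of `π`, and `1` otherwise. -/
def lamDP {n : ℕ} (p : n.Partition) : ℕ :=
  if p.parts = 0 ∨ (p.parts.sup ∈ p.parts ∧ p.parts.sup - 1 ∈ p.parts) then 0 else 1

/- ### auxiliary lemmas -/

lemma sup_mem_of_ne_zero {s : Multiset ℕ} (h : s ≠ 0) : s.sup ∈ s := by
  induction s using Multiset.induction with
  | empty => simp at h
  | cons a s ih =>
    rcases eq_or_ne s 0 with rfl | hs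
    · simp
    · rw [Multiset.sup_cons]
      rcases le_total a s.sup with h1 | h1
      · rw [sup_eq_right.mpr h1]
        exact Multiset.mem_cons_of_mem (ih hs)
      · rw [sup_eq_left.mpr h1]
        exact Multiset.mem_cons_self a s

lemma sum_filter_pos (s : Multiset ℕ) : (s.filter (0 < ·)).sum = s.sum := by
  conv_rhs => rw [← Multiset.filter_add_not (0 < ·) s]
  rw [Multiset.sum_add, Multiset.sum_eq_zero (s := s.filter fun a => ¬ 0 < a)
    (fun x hx => by simpa using (Multiset.of_mem_filter hx)), add_zero]

lemma mem_distincts' {n : ℕ} {p : n.Partition} :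
    p ∈ Nat.Partition.distincts n ↔ p.parts.Nodup := by
  unfold Nat.Partition.distincts
  simp

lemma lam_eq_one_iff {n : ℕ} (p : n.Partition) :
    lamDP p = 1 ↔ p.parts ≠ 0 ∧ p.parts.sup - 1 ∉ p.parts := by
  unfold lamDP
  split_ifs with h
  · simp only [(by norm_num : (0 : ℕ) ≠ 1), false_iff]
    rintro ⟨h1, h2⟩
    rcases h with h | h
    · exact h1 h
    · exact h2 h.2
  · push_neg at h
    simp only [true_iff]
    exact ⟨h.1, fun hc => (h.2 (sup_mem_of_ne_zero h.1) hc).elim⟩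

lemma part_le {n : ℕ} (p : n.Partition) {i : ℕ} (hi : i ∈ p.parts) : i ≤ n := by
  simpa [p.parts_sum] using Multiset.le_sum_of_mem hi

/-- the forward map: decrement the largest part (dropping it when it becomes 0). -/
def fwd {n : ℕ} (p : n.Partition) (hne : p.parts ≠ 0) : (n - 1).Partition where
  parts := ((p.parts.sup - 1) ::ₘ p.parts.erase p.parts.sup).filter (0 < ·)
  parts_pos := fun h => (Multiset.of_mem_filter h)
  parts_sum := by
    have hmem : p.parts.sup ∈ p.parts := sup_mem_of_ne_zero hne
    have hsum : p.parts.sup + (p.parts.erase p.parts.sup).sum = n := by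
      rw [← Multiset.sum_cons, Multiset.cons_erase hmem, p.parts_sum]
    have hpos : 1 ≤ p.parts.sup := p.parts_pos hmem
    rw [sum_filter_pos, Multiset.sum_cons]
    omega

/-- the backward map: increment the largest part (inserting a part 1 when empty). -/
def bwd (n : ℕ) (hn : 1 ≤ n) (q : (n - 1).Partition) : n.Partition where
  parts := (q.parts.sup + 1) ::ₘ q.parts.erase q.parts.sup
  parts_pos := by
    intro i hi
    rcases Multiset.mem_cons.mp hi with h | h
    · omega
    · exact q.parts_pos (Multiset.mem_of_mem_erase h)
  parts_sum := by
    rcases eq_or_ne q.parts 0 with h0 | h0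
    · have : (0 : ℕ) = n - 1 := by rw [← q.parts_sum, h0]; rfl
      simp [h0]
      omega
    · have hmem : q.parts.sup ∈ q.parts := sup_mem_of_ne_zero h0
      have hsum : q.parts.sup + (q.parts.erase q.parts.sup).sum = n - 1 := by
        rw [← Multiset.sum_cons, Multiset.cons_erase hmem, q.parts_sum]
      rw [Multiset.sum_cons]
      omega

lemma bwd_sup (n : ℕ) (hn : 1 ≤ n) (q : (n - 1).Partition) :
    (bwd n hn q).parts.sup = q.parts.sup + 1 := by
  show ((q.parts.sup + 1) ::ₘ q.parts.erase q.parts.sup).sup = q.parts.sup + 1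
  rw [Multiset.sup_cons]
  have h1 : (q.parts.erase q.parts.sup).sup ≤ q.parts.sup :=
    Multiset.sup_le.mpr fun b hb => Multiset.le_sup (Multiset.mem_of_mem_erase hb)
  omega

lemma lam_one_card (n : ℕ) (hn : 1 ≤ n) :
    ((Nat.Partition.distincts n).filter fun p => lamDP p = 1).card
      = (Nat.Partition.distincts (n - 1)).card := by
  have hmemfilter : ∀ p : n.Partition,
      p ∈ (Nat.Partition.distincts n).filter (fun p => lamDP p = 1) ↔
        p.parts.Nodup ∧ (p.parts ≠ 0 ∧ p.parts.sup - 1 ∉ p.parts) := by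
    intro p
    rw [Finset.mem_filter, mem_distincts', lam_eq_one_iff]
  refine Finset.card_bij' (fun p hp => fwd p ((hmemfilter p).mp hp).2.1)
    (fun q _ => bwd n hn q) ?_ ?_ ?_ ?_
  · -- i maps into distincts (n-1)
    intro p hp
    rw [mem_distincts']
    obtain ⟨hd, hne, hnm⟩ := (hmemfilter p).mp hp
    show (((p.parts.sup - 1) ::ₘ p.parts.erase p.parts.sup).filter (0 < ·)).Nodup
    apply Multiset.Nodup.filter
    rw [Multiset.nodup_cons]
    exact ⟨fun hc => hnm (Multiset.mem_of_mem_erase hc), hd.erase _⟩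
  · -- j maps into the filter
    intro q hq
    rw [mem_distincts'] at hq
    rw [hmemfilter]
    have hd := hq
    have hsup := bwd_sup n hn q
    have hparts : (bwd n hn q).parts = (q.parts.sup + 1) ::ₘ q.parts.erase q.parts.sup := rfl
    constructor
    · rw [hparts, Multiset.nodup_cons]
      refine ⟨fun hc => ?_, hd.erase _⟩
      have := Multiset.le_sup (Multiset.mem_of_mem_erase hc)
      omega
    constructor
    · rw [hparts]; exact Multiset.cons_ne_zero
    · rw [hsup, hparts]
      simp only [Nat.add_sub_cancel, Multiset.mem_cons]
      rintro (h | h)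
      · omega
      · exact hd.notMem_erase h
  · -- left inverse
    intro p hp
    obtain ⟨hd, hne, hnm⟩ := (hmemfilter p).mp hp
    apply Nat.Partition.ext
    have hmem : p.parts.sup ∈ p.parts := sup_mem_of_ne_zero hne
    have hsuppos : 1 ≤ p.parts.sup := p.parts_pos hmem
    set l := p.parts.sup with hl
    have hparts : (fwd p hne).parts = ((l - 1) ::ₘ p.parts.erase l).filter (0 < ·) := rfl
    rcases eq_or_ne l 1 with h1 | h1
    · -- parts = {1}
      have herase : p.parts.erase l = 0 := by
        apply Multiset.eq_zero_of_forall_notMem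
        intro x hx
        have hxp := p.parts_pos (Multiset.mem_of_mem_erase hx)
        have hxl : x ≤ l := Multiset.le_sup (Multiset.mem_of_mem_erase hx)
        have : x = l := by omega
        exact hd.notMem_erase (this ▸ hx)
      have hF : (fwd p hne).parts = 0 := by
        rw [hparts, herase, h1]
        rfl
      show ((fwd p hne).parts.sup + 1) ::ₘ (fwd p hne).parts.erase (fwd p hne).parts.sup
          = p.parts
      rw [hF]
      have : p.parts = l ::ₘ p.parts.erase l := (Multiset.cons_erase hmem).symm
      rw [this, herase, h1]
      rfl
    · -- l ≥ 2
      have hF : (fwd p hne).parts = (l - 1) ::ₘ p.parts.erase l := by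
        rw [hparts, Multiset.filter_eq_self.mpr]
        intro a ha
        rcases Multiset.mem_cons.mp ha with h | h
        · omega
        · exact p.parts_pos (Multiset.mem_of_mem_erase h)
      have hFsup : (fwd p hne).parts.sup = l - 1 := by
        rw [hF, Multiset.sup_cons]
        have : (p.parts.erase l).sup ≤ l - 1 := by
          apply Multiset.sup_le.mpr
          intro b hb
          have h2 := Multiset.le_sup (Multiset.mem_of_mem_erase hb)
          have h3 : b ≠ l := fun hc => hd.notMem_erase (hc ▸ hb)
          omega
        omega
      show ((fwd p hne).parts.sup + 1) ::ₘ (fwd p hne).parts.erase (fwd p hne).parts.sup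
          = p.parts
      rw [hFsup, hF]
      have : l - 1 + 1 = l := by omega
      rw [this, Multiset.erase_cons_head, Multiset.cons_erase hmem]
  · -- right inverse
    intro q hq
    rw [mem_distincts'] at hq
    have hd := hq
    apply Nat.Partition.ext
    have hsup := bwd_sup n hn q
    have hparts : (bwd n hn q).parts = (q.parts.sup + 1) ::ₘ q.parts.erase q.parts.sup := rfl
    have hne : (bwd n hn q).parts ≠ 0 := by rw [hparts]; exact Multiset.cons_ne_zero
    show (((bwd n hn q).parts.sup - 1) ::ₘ
        (bwd n hn q).parts.erase (bwd n hn q).parts.sup).filter (0 < ·) = q.parts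
    rw [hsup, hparts, Nat.add_sub_cancel, Multiset.erase_cons_head]
    rcases eq_or_ne q.parts 0 with h0 | h0
    · rw [h0]
      rfl
    · have hmem : q.parts.sup ∈ q.parts := sup_mem_of_ne_zero h0
      rw [Multiset.cons_erase hmem, Multiset.filter_eq_self.mpr]
      exact fun a ha => q.parts_pos ha

lemma val_sum (t : Finset ℕ) : t.val.sum = ∑ i ∈ t, i := by
  rw [Finset.sum_val]
  rfl

lemma card_distincts_eq (m N : ℕ) (h : m ≤ N) :
    (((Icc 1 N).powerset).filter fun t => ∑ i ∈ t, i = m).card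
      = (Nat.Partition.distincts m).card := by
  refine Finset.card_bij' (fun t ht =>
      (⟨t.val, fun {i} hi => (Finset.mem_Icc.mp
          (Finset.mem_powerset.mp (Finset.mem_filter.mp ht).1 hi)).1, by
        have := (Finset.mem_filter.mp ht).2
        rw [← this, ← val_sum]⟩ : m.Partition))
    (fun p hp => ⟨p.parts, mem_distincts'.mp hp⟩) ?_ ?_ ?_ ?_
  · intro t ht
    rw [mem_distincts']
    exact t.nodup
  · intro p hp
    rw [Finset.mem_filter, Finset.mem_powerset]
    constructor
    · intro i hi
      rw [Finset.mem_Icc]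
      exact ⟨p.parts_pos hi, le_trans (part_le p hi) h⟩
    · rw [← val_sum]
      exact p.parts_sum
  · intro t ht
    apply Finset.eq_of_veq
    rfl
  · intro p hp
    apply Nat.Partition.ext
    rfl

lemma lam_zero_or_one {n : ℕ} (p : n.Partition) : lamDP p = 0 ∨ lamDP p = 1 := by
  unfold lamDP; split_ifs <;> simp

lemma coeff_prod_eq (N m : ℕ) (h : m ≤ N) :
    PowerSeries.coeff (R := L) m (∏ k ∈ Icc 1 N, (1 + (X : PowerSeries L) ^ k))
      = ((Nat.Partition.distincts m).card : L) := by
  have : (∏ k ∈ Icc 1 N, (1 + (X : PowerSeries L) ^ k))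
      = ∑ t ∈ (Icc 1 N).powerset, (X : PowerSeries L) ^ (∑ i ∈ t, i) := by
    calc ∏ k ∈ Icc 1 N, (1 + (X : PowerSeries L) ^ k)
        = ∏ k ∈ Icc 1 N, ((X : PowerSeries L) ^ k + 1) := by
          apply Finset.prod_congr rfl; intros; ring
      _ = ∑ t ∈ (Icc 1 N).powerset,
            (∏ i ∈ t, (X : PowerSeries L) ^ i) * ∏ i ∈ Icc 1 N \ t, 1 :=
          Finset.prod_add _ _ _
      _ = ∑ t ∈ (Icc 1 N).powerset, (X : PowerSeries L) ^ (∑ i ∈ t, i) := by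
          apply Finset.sum_congr rfl
          intros t _
          rw [Finset.prod_const_one, mul_one, Finset.prod_pow_eq_pow_sum]
  rw [this, map_sum]
  simp only [PowerSeries.coeff_X_pow]
  have hflip : ∀ t ∈ (Icc 1 N).powerset,
      (if m = ∑ i ∈ t, i then (1 : L) else 0) = if ∑ i ∈ t, i = m then 1 else 0 := by
    intro t _
    simp [eq_comm]
  rw [Finset.sum_congr rfl hflip, Finset.sum_boole, card_distincts_eq m N h]

/-- `(-q;q)∞ (1 - q + zq) = Σ_{π ∈ PD} z^{λ(π)} q^{|π|}`: the coefficient of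
`qⁿ` of the left side (with the product truncated at any `N ≥ n`) is the sum of
`z^{λ(π)}` over partitions `π` of `n` into distinct parts. -/
theorem dist_times_linear_eq_lambda_sum :
    ∀ N n : ℕ, n ≤ N →
      PowerSeries.coeff (R := L) n
        ((∏ k ∈ Icc 1 N, (1 + (X : PowerSeries L) ^ k)) * (1 - X + C (R := L) Z * X)) =
      ∑ p ∈ Nat.Partition.distincts n, Z ^ lamDP p := by
  intro N n hn
  set P := ∏ k ∈ Icc 1 N, (1 + (X : PowerSeries L) ^ k) with hP
  have key : P * (1 - X + C (R := L) Z * X) = P + C (R := L) (Z - 1) * (P * X) := by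
    rw [map_sub, map_one]
    ring
  rw [key, map_add]
  rw [PowerSeries.coeff_C_mul]
  cases n with
  | zero =>
    rw [coeff_prod_eq N 0 (by omega)]
    have : (PowerSeries.coeff (R := L) 0) (P * X) = 0 := by
      rw [PowerSeries.coeff_zero_eq_constantCoeff_apply, map_mul, constantCoeff_X, mul_zero]
    rw [this, mul_zero, add_zero]
    have hd0 : Nat.Partition.distincts 0 = {(default : Nat.Partition 0)} := by
      apply Finset.eq_singleton_iff_unique_mem.mpr
      refine ⟨mem_distincts'.mpr ?_, fun x _ => Subsingleton.elim x default⟩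
      simp
    rw [hd0, Finset.sum_singleton]
    have : lamDP (default : Nat.Partition 0) = 0 := by
      unfold lamDP
      rw [if_pos (Or.inl (Nat.Partition.partition_zero_parts _))]
    rw [this]
    norm_num
  | succ m =>
    rw [PowerSeries.coeff_succ_mul_X, coeff_prod_eq N (m+1) hn,
      coeff_prod_eq N m (by omega)]
    -- split the RHS sum
    rw [← Finset.sum_filter_add_sum_filter_not (Nat.Partition.distincts (m+1))
      (fun p => lamDP p = 1)]
    have h1 : ∑ p ∈ (Nat.Partition.distincts (m+1)).filter (fun p => lamDP p = 1),
        Z ^ lamDP p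
        = ((Nat.Partition.distincts m).card : L) * Z := by
      rw [Finset.sum_congr rfl (fun p hp => by
        rw [(Finset.mem_filter.mp hp).2, pow_one]), Finset.sum_const, nsmul_eq_mul]
      congr 2
      have := lam_one_card (m+1) (by omega)
      rw [show m + 1 - 1 = m from rfl] at this
      exact this
    have h2 : ∑ p ∈ (Nat.Partition.distincts (m+1)).filter (fun p => ¬ lamDP p = 1),
        Z ^ lamDP p
        = (((Nat.Partition.distincts (m+1)).filter (fun p => ¬ lamDP p = 1)).card : L) := by
      rw [Finset.sum_congr rfl (fun p hp => by
        rcases lam_zero_or_one p with h | h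
        · rw [h, pow_zero]
        · exact absurd h (Finset.mem_filter.mp hp).2), Finset.sum_const, nsmul_eq_mul, mul_one]
    rw [h1, h2]
    have hcard : ((Nat.Partition.distincts (m+1)).filter (fun p => ¬ lamDP p = 1)).card
        + (Nat.Partition.distincts m).card = (Nat.Partition.distincts (m+1)).card := by
      have := lam_one_card (m+1) (by omega)
      rw [show m + 1 - 1 = m from rfl] at this
      rw [← this, add_comm]
      exact Finset.card_filter_add_card_filter_not _
    rw [← hcard]
    push_cast
    ring
end

section
/- The two-variable formal power series identity (-q;q²)_∞ (1 - q² + zq²) = 1 + q + (z-1)q² + (z+q)q³ + Σ_{m≥3} (1+q)(1+q³)⋯(1+q^{2m-5}) q^{2m-1} (z + q^{2m-3}) holds. -/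
open Finset PowerSeries

lemma key_expansion (N : ℕ) :
    (1 + X + (C (R := L) Z - 1) * X ^ 2 + (C (R := L) Z + X) * X ^ 3 +
      ∑ i ∈ range N,
        (∏ k ∈ Icc 1 (i + 1), (1 + (X : PowerSeries L) ^ (2 * k - 1))) * X ^ (2 * i + 5) *
          (C (R := L) Z + X ^ (2 * i + 3)))
    = (∏ k ∈ Icc 1 N, (1 + (X : PowerSeries L) ^ (2 * k - 1))) * (1 - X ^ 2 + C (R := L) Z * X ^ 2)
      + (∏ k ∈ Icc 1 N, (1 + (X : PowerSeries L) ^ (2 * k - 1))) * X ^ (2 * N + 1) *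
          (1 + C (R := L) Z * X ^ 2 + X ^ (2 * N + 3)) := by
  induction N with
  | zero => simp; ring
  | succ n ih =>
    rw [Finset.sum_range_succ, ← add_assoc, ih, prod_Icc_succ_top (by omega : 1 ≤ n + 1),
      show 2 * (n + 1) - 1 = 2 * n + 1 by omega,
      show 2 * (n + 1) + 1 = 2 * n + 3 by omega,
      show 2 * (n + 1) + 3 = 2 * n + 5 by omega]
    ring

/-- `(-q;q²)∞ (1 - q² + zq²)
    = 1 + q + (z-1)q² + (z+q)q³
      + Σ_{m≥3} (1+q)(1+q³)⋯(1+q^{2m-5}) q^{2m-1} (z + q^{2m-3})`,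
as formal power series in `q` over `ℤ[z,z⁻¹]` (coefficients of `qⁿ` computed
with any truncation `N ≥ n`). -/
theorem distinct_odd_times_quadratic_expansion :
    ∀ N n : ℕ, n ≤ N →
      PowerSeries.coeff (R := L) n
        ((∏ k ∈ Icc 1 N, (1 + (X : PowerSeries L) ^ (2 * k - 1))) *
          (1 - X ^ 2 + C (R := L) Z * X ^ 2)) =
      PowerSeries.coeff (R := L) n
        (1 + X + (C (R := L) Z - 1) * X ^ 2 + (C (R := L) Z + X) * X ^ 3 +
          ∑ m ∈ Icc 3 (N + 3),
            (∏ k ∈ Icc 1 (m - 2), (1 + (X : PowerSeries L) ^ (2 * k - 1))) * X ^ (2 * m - 1) *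
              (C (R := L) Z + X ^ (2 * m - 3))) := by
  intro N n hn
  have hsum : ∑ m ∈ Icc 3 (N + 3),
      (∏ k ∈ Icc 1 (m - 2), (1 + (X : PowerSeries L) ^ (2 * k - 1))) * X ^ (2 * m - 1) *
        (C (R := L) Z + X ^ (2 * m - 3))
      = ∑ i ∈ range (N + 1),
        (∏ k ∈ Icc 1 (i + 1), (1 + (X : PowerSeries L) ^ (2 * k - 1))) * X ^ (2 * i + 5) *
          (C (R := L) Z + X ^ (2 * i + 3)) := by
    rw [show Icc 3 (N + 3) = Ico 3 (N + 4) from (Finset.Ico_add_one_right_eq_Icc (a := 3) (b := N + 3)).symm,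
      Finset.sum_Ico_eq_sum_range, show N + 4 - 3 = N + 1 by omega]
    refine Finset.sum_congr rfl fun i _ => ?_
    rw [show 3 + i - 2 = i + 1 by omega, show 2 * (3 + i) - 1 = 2 * i + 5 by omega,
      show 2 * (3 + i) - 3 = 2 * i + 3 by omega]
  rw [hsum, key_expansion (N + 1), prod_Icc_succ_top (by omega : 1 ≤ N + 1),
    show 2 * (N + 1) - 1 = 2 * N + 1 by omega,
    show 2 * (N + 1) + 1 = 2 * N + 3 by omega,
    show 2 * (N + 1) + 3 = 2 * N + 5 by omega]
  have hrw : (∏ k ∈ Icc 1 N, (1 + (X : PowerSeries L) ^ (2 * k - 1))) *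
        (1 + X ^ (2 * N + 1)) * (1 - X ^ 2 + C (R := L) Z * X ^ 2) +
      (∏ k ∈ Icc 1 N, (1 + (X : PowerSeries L) ^ (2 * k - 1))) * (1 + X ^ (2 * N + 1)) *
        X ^ (2 * N + 3) * (1 + C (R := L) Z * X ^ 2 + X ^ (2 * N + 5))
      = (∏ k ∈ Icc 1 N, (1 + (X : PowerSeries L) ^ (2 * k - 1))) *
          (1 - X ^ 2 + C (R := L) Z * X ^ 2) +
        X ^ (2 * N + 1) *
          ((∏ k ∈ Icc 1 N, (1 + (X : PowerSeries L) ^ (2 * k - 1))) *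
            ((1 - X ^ 2 + C (R := L) Z * X ^ 2) +
              (1 + X ^ (2 * N + 1)) * X ^ 2 * (1 + C (R := L) Z * X ^ 2 + X ^ (2 * N + 5)))) := by
    ring
  rw [hrw, map_add]
  have hz : (PowerSeries.coeff (R := L) n) (X ^ (2 * N + 1) *
      ((∏ k ∈ Icc 1 N, (1 + (X : PowerSeries L) ^ (2 * k - 1))) *
        ((1 - X ^ 2 + C (R := L) Z * X ^ 2) +
          (1 + X ^ (2 * N + 1)) * X ^ 2 * (1 + C (R := L) Z * X ^ 2 + X ^ (2 * N + 5))))) = 0 := by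
    exact PowerSeries.X_pow_dvd_iff.mp (dvd_mul_right _ _) n (by omega)
  rw [hz, add_zero]
end

section
/- Cauchy's identity: for |q|<1 and |t|<1, Σ_{n≥0} ((a;q)_n / (q;q)_n) t^n = (at;q)_∞ / (t;q)_∞. -/
open Finset Filter Complex Topology

namespace CauchyAux

/-- The coefficient `(a;q)_n / (q;q)_n`. -/
noncomputable def c (a q : ℂ) (n : ℕ) : ℂ :=
  (∏ k ∈ range n, (1 - a * q ^ k)) / (∏ k ∈ range n, (1 - q * q ^ k))

lemma one_sub_ne_zero {z : ℂ} (h : ‖z‖ < 1) : (1 : ℂ) - z ≠ 0 := by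
  intro h0
  have : z = 1 := by linear_combination -h0
  rw [this] at h; simp at h

lemma den_factor_ne_zero {q : ℂ} (hq : ‖q‖ < 1) (k : ℕ) : (1 : ℂ) - q * q ^ k ≠ 0 := by
  apply one_sub_ne_zero
  have h1 : ‖q * q ^ k‖ = ‖q‖ * ‖q‖ ^ k := by rw [norm_mul, norm_pow]
  have h2 : ‖q‖ ^ k ≤ 1 := pow_le_one₀ (norm_nonneg q) hq.le
  nlinarith [norm_nonneg q]

lemma den_ne_zero {q : ℂ} (hq : ‖q‖ < 1) (n : ℕ) :
    (∏ k ∈ range n, (1 - q * q ^ k)) ≠ 0 :=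
  prod_ne_zero_iff.2 fun k _ => den_factor_ne_zero hq k

lemma c_zero (a q : ℂ) : c a q 0 = 1 := by simp [c]

lemma c_rec (a : ℂ) {q : ℂ} (hq : ‖q‖ < 1) (n : ℕ) :
    c a q (n + 1) * (1 - q * q ^ n) = c a q n * (1 - a * q ^ n) := by
  unfold c
  rw [prod_range_succ, prod_range_succ]
  have h1 := den_ne_zero hq n
  have h2 := den_factor_ne_zero hq n
  rw [div_mul_eq_mul_div, mul_div_mul_right _ _ h2]
  ring

lemma ratio_helper (A B C D x : ℝ) (h : A * D = C * B) (hD : D ≠ 0) (hC : C ≠ 0)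
    (hx : x ≠ 0) (n : ℕ) : B / D * x = A * x ^ (n + 1) / (C * x ^ n) := by
  have hxn : x ^ n ≠ 0 := pow_ne_zero n hx
  field_simp
  linear_combination (-x * x ^ n) * h

lemma summable_norm_c (a : ℂ) {q : ℂ} (hq : ‖q‖ < 1) {x : ℝ} (hx0 : 0 ≤ x) (hx : x < 1) :
    Summable (fun n => ‖c a q n‖ * x ^ n) := by
  by_cases hA : ∃ m, a * q ^ m = 1
  · obtain ⟨m, hm⟩ := hA
    apply summable_of_ne_finset_zero (s := range (m + 1))
    intro n hn
    rw [mem_range, not_lt] at hn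
    have : c a q n = 0 := by
      unfold c
      rw [prod_eq_zero (i := m) (by rw [mem_range]; omega) (by rw [hm]; ring), zero_div]
    simp [this]
  · push_neg at hA
    rcases eq_or_lt_of_le hx0 with hx0' | hx0'
    · apply summable_of_ne_finset_zero (s := range 1)
      intro n hn
      rw [mem_range, not_lt] at hn
      rw [← hx0', zero_pow (by omega), mul_zero]
    · have hcne : ∀ n, c a q n ≠ 0 := by
        intro n
        unfold c
        apply div_ne_zero _ (den_ne_zero hq n)
        exact prod_ne_zero_iff.2 fun k _ => sub_ne_zero.2 fun h => hA k h.symm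
      have hfne : ∀ n, ‖c a q n‖ * x ^ n ≠ 0 := fun n =>
        mul_ne_zero (norm_ne_zero_iff.2 (hcne n)) (pow_ne_zero n hx0'.ne')
      apply summable_of_ratio_test_tendsto_lt_one hx (Eventually.of_forall hfne)
      have hq0 : Tendsto (fun n : ℕ => q ^ n) atTop (𝓝 0) :=
        tendsto_pow_atTop_nhds_zero_of_norm_lt_one hq
      have h1 : Tendsto (fun n : ℕ => ‖(1 : ℂ) - a * q ^ n‖ / ‖(1 : ℂ) - q * q ^ n‖ * x)
          atTop (𝓝 x) := by
        have hnum : Tendsto (fun n : ℕ => ‖(1:ℂ) - a * q ^ n‖) atTop (𝓝 1) := by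
          have h : Tendsto (fun n : ℕ => (1:ℂ) - a * q ^ n) atTop (𝓝 1) := by
            have := (hq0.const_mul a).const_sub (1:ℂ)
            simpa using this
          simpa using h.norm
        have hden : Tendsto (fun n : ℕ => ‖(1:ℂ) - q * q ^ n‖) atTop (𝓝 1) := by
          have h : Tendsto (fun n : ℕ => (1:ℂ) - q * q ^ n) atTop (𝓝 1) := by
            have := (hq0.const_mul q).const_sub (1:ℂ)
            simpa using this
          simpa using h.norm
        have := (hnum.div hden one_ne_zero).mul_const x
        simpa using this
      apply h1.congr
      intro n
      have hrecn : ‖c a q (n+1)‖ * ‖(1:ℂ) - q * q ^ n‖ = ‖c a q n‖ * ‖(1:ℂ) - a * q ^ n‖ := by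
        rw [← norm_mul, ← norm_mul, c_rec a hq n]
      have hdn : ‖(1:ℂ) - q * q ^ n‖ ≠ 0 := norm_ne_zero_iff.2 (den_factor_ne_zero hq n)
      have hcn : ‖c a q n‖ ≠ 0 := norm_ne_zero_iff.2 (hcne n)
      have hxn : x ^ n ≠ 0 := pow_ne_zero n hx0'.ne'
      rw [Real.norm_of_nonneg (by positivity), Real.norm_of_nonneg (by positivity)]
      exact ratio_helper _ _ _ _ _ hrecn hdn hcn hx0'.ne' n

lemma summable_c (a : ℂ) {q s : ℂ} (hq : ‖q‖ < 1) (hs : ‖s‖ < 1) :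
    Summable (fun n => c a q n * s ^ n) := by
  apply Summable.of_norm
  have : (fun n => ‖c a q n * s ^ n‖) = fun n => ‖c a q n‖ * ‖s‖ ^ n := by
    funext n; rw [norm_mul, norm_pow]
  rw [this]
  exact summable_norm_c a hq (norm_nonneg s) hs

/-- The generating function `S(s) = Σ c_n s^n`. -/
noncomputable def S (a q s : ℂ) : ℂ := ∑' n, c a q n * s ^ n

lemma func_eq (a : ℂ) {q s : ℂ} (hq : ‖q‖ < 1) (hs : ‖s‖ < 1) :
    (1 - s) * S a q s = (1 - a * s) * S a q (q * s) := by
  have hqs : ‖q * s‖ < 1 := by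
    rw [norm_mul]; nlinarith [norm_nonneg q, norm_nonneg s]
  have hf : Summable (fun n => c a q n * s ^ n) := summable_c a hq hs
  have hg : Summable (fun n => c a q n * (q * s) ^ n) := summable_c a hq hqs
  have E1 : S a q s - S a q (q * s) = ∑' n, (c a q n * s ^ n - c a q n * (q * s) ^ n) :=
    (Summable.tsum_sub hf hg).symm
  have E2 : s * S a q s - a * s * S a q (q * s) =
      ∑' n, (s * (c a q n * s ^ n) - a * s * (c a q n * (q * s) ^ n)) := by
    unfold S
    rw [← tsum_mul_left, ← tsum_mul_left, ← Summable.tsum_sub (hf.mul_left s) (hg.mul_left (a * s))]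
  have E3 : (∑' n, (c a q n * s ^ n - c a q n * (q * s) ^ n)) =
      ∑' n, (s * (c a q n * s ^ n) - a * s * (c a q n * (q * s) ^ n)) := by
    rw [Summable.tsum_eq_zero_add (hf.sub hg)]
    have h0 : c a q 0 * s ^ 0 - c a q 0 * (q * s) ^ 0 = 0 := by ring
    rw [h0, zero_add]
    apply tsum_congr
    intro n
    linear_combination (s ^ (n + 1)) * c_rec a hq n
  have E : S a q s - S a q (q * s) = s * S a q s - a * s * S a q (q * s) := by
    rw [E1, E2, E3]
  linear_combination E

lemma norm_pow_mul_lt_one {q t : ℂ} (hq : ‖q‖ < 1) (ht : ‖t‖ < 1) (n : ℕ) :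
    ‖q ^ n * t‖ < 1 := by
  rw [norm_mul, norm_pow]
  have h1 : ‖q‖ ^ n ≤ 1 := pow_le_one₀ (norm_nonneg q) hq.le
  nlinarith [norm_nonneg t, pow_nonneg (norm_nonneg q) n]

lemma key_induction (a : ℂ) {q t : ℂ} (hq : ‖q‖ < 1) (ht : ‖t‖ < 1) (n : ℕ) :
    S a q t * ∏ k ∈ range n, (1 - t * q ^ k) =
      (∏ k ∈ range n, (1 - a * t * q ^ k)) * S a q (q ^ n * t) := by
  induction n with
  | zero => simp
  | succ n ih =>
    have hfe := func_eq a hq (norm_pow_mul_lt_one hq ht n)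
    have h1 : q * (q ^ n * t) = q ^ (n + 1) * t := by ring
    rw [h1] at hfe
    rw [prod_range_succ, prod_range_succ, ← mul_assoc, ih]
    linear_combination (∏ k ∈ range n, (1 - a * t * q ^ k)) * hfe

set_option maxHeartbeats 1000000 in
lemma tendsto_S_one (a : ℂ) {q t : ℂ} (hq : ‖q‖ < 1) (ht : ‖t‖ < 1) :
    Tendsto (fun n => S a q (q ^ n * t)) atTop (𝓝 1) := by
  have hsum := summable_norm_c a hq (norm_nonneg t) ht
  have hsum1 : Summable (fun m => ‖c a q (m + 1)‖ * ‖t‖ ^ (m + 1)) :=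
    (summable_nat_add_iff 1).2 hsum
  set C := ∑' m, ‖c a q (m + 1)‖ * ‖t‖ ^ (m + 1) with hC
  have hbound : ∀ n : ℕ, ‖S a q (q ^ n * t) - 1‖ ≤ ‖q‖ ^ n * C := by
    intro n
    have hsn := norm_pow_mul_lt_one hq ht n
    have hf : Summable (fun m => c a q m * (q ^ n * t) ^ m) := summable_c a hq hsn
    have hEq : S a q (q ^ n * t) - 1 = ∑' m, c a q (m + 1) * (q ^ n * t) ^ (m + 1) := by
      unfold S
      rw [Summable.tsum_eq_zero_add hf]
      simp [c_zero]
    rw [hEq]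
    have hnorm0 : Summable (fun m => ‖c a q m * (q ^ n * t) ^ m‖) := by
      have h := summable_norm_c a hq (norm_nonneg (q ^ n * t)) hsn
      apply h.congr
      intro m
      simp [norm_mul, norm_pow, mul_pow]
    have hnorm : Summable (fun m => ‖c a q (m + 1) * (q ^ n * t) ^ (m + 1)‖) :=
      (summable_nat_add_iff 1).2 hnorm0
    have hterm : ∀ m : ℕ, ‖c a q (m + 1) * (q ^ n * t) ^ (m + 1)‖ ≤
        ‖q‖ ^ n * (‖c a q (m + 1)‖ * ‖t‖ ^ (m + 1)) := by
      intro m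
      rw [norm_mul, norm_pow, norm_mul, norm_pow, mul_pow]
      have h1 : (‖q‖ ^ n) ^ (m + 1) ≤ ‖q‖ ^ n :=
        pow_le_of_le_one (pow_nonneg (norm_nonneg q) n)
          (pow_le_one₀ (norm_nonneg q) hq.le) (Nat.succ_ne_zero m)
      have h2 : (0:ℝ) ≤ ‖c a q (m + 1)‖ * ‖t‖ ^ (m + 1) := by positivity
      calc ‖c a q (m + 1)‖ * ((‖q‖ ^ n) ^ (m + 1) * ‖t‖ ^ (m + 1))
          ≤ ‖c a q (m + 1)‖ * (‖q‖ ^ n * ‖t‖ ^ (m + 1)) := by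
            apply mul_le_mul_of_nonneg_left _ (norm_nonneg _)
            exact mul_le_mul_of_nonneg_right h1 (pow_nonneg (norm_nonneg t) _)
        _ = ‖q‖ ^ n * (‖c a q (m + 1)‖ * ‖t‖ ^ (m + 1)) := by ring
    calc ‖∑' m, c a q (m + 1) * (q ^ n * t) ^ (m + 1)‖
        ≤ ∑' m, ‖c a q (m + 1) * (q ^ n * t) ^ (m + 1)‖ := norm_tsum_le_tsum_norm hnorm
      _ ≤ ∑' m, ‖q‖ ^ n * (‖c a q (m + 1)‖ * ‖t‖ ^ (m + 1)) :=
          Summable.tsum_le_tsum hterm hnorm (hsum1.mul_left _)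
      _ = ‖q‖ ^ n * C := tsum_mul_left
  have htend : Tendsto (fun n : ℕ => ‖q‖ ^ n * C) atTop (𝓝 0) := by
    have := (tendsto_pow_atTop_nhds_zero_of_lt_one (norm_nonneg q) hq).mul_const C
    simpa using this
  have h0 : Tendsto (fun n => S a q (q ^ n * t) - 1) atTop (𝓝 0) :=
    squeeze_zero_norm hbound htend
  have := h0.add_const (1 : ℂ)
  simpa using this

set_option maxHeartbeats 1000000 in
lemma log_summable (z : ℂ) {q : ℂ} (hq : ‖q‖ < 1) :
    Summable (fun k : ℕ => Complex.log (1 - z * q ^ k)) := by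
  apply Summable.of_norm_bounded_eventually_nat (g := fun k => 3 / 2 * ‖z‖ * ‖q‖ ^ k)
  · exact (summable_geometric_of_lt_one (norm_nonneg q) hq).mul_left _
  · have h0 : Tendsto (fun k : ℕ => ‖z‖ * ‖q‖ ^ k) atTop (𝓝 0) := by
      have := (tendsto_pow_atTop_nhds_zero_of_lt_one (norm_nonneg q) hq).const_mul ‖z‖
      simpa using this
    filter_upwards [h0.eventually_le_const (by norm_num : (0 : ℝ) < 1 / 2)] with k hk
    have hzk : ‖-(z * q ^ k)‖ ≤ 1 / 2 := by
      rw [norm_neg, norm_mul, norm_pow]; exact hk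
    have h2 := Complex.norm_log_one_add_half_le_self hzk
    have h1 : (1 : ℂ) - z * q ^ k = 1 + -(z * q ^ k) := by ring
    rw [h1]
    calc ‖Complex.log (1 + -(z * q ^ k))‖ ≤ 3 / 2 * ‖-(z * q ^ k)‖ := h2
      _ = 3 / 2 * ‖z‖ * ‖q‖ ^ k := by rw [norm_neg, norm_mul, norm_pow]; ring

lemma multipliable_aux (z : ℂ) {q : ℂ} (hq : ‖q‖ < 1) :
    Multipliable (fun k : ℕ => 1 - z * q ^ k) := by
  by_cases h : ∀ k : ℕ, (1 : ℂ) - z * q ^ k ≠ 0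
  · exact Complex.multipliable_of_summable_log (log_summable z hq)
  · push_neg at h
    obtain ⟨k0, hk0⟩ := h
    refine ⟨0, ?_⟩
    rw [HasProd]
    have hev : ∀ᶠ s : Finset ℕ in atTop, (∏ k ∈ s, ((1 : ℂ) - z * q ^ k)) = 0 := by
      filter_upwards [eventually_ge_atTop ({k0} : Finset ℕ)] with s hs
      exact prod_eq_zero (hs (mem_singleton_self k0)) hk0
    exact Tendsto.congr' (hev.mono fun s hs => hs.symm) tendsto_const_nhds

lemma tprod_ne_zero (z : ℂ) {q : ℂ} (hq : ‖q‖ < 1)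
    (h : ∀ k : ℕ, (1 : ℂ) - z * q ^ k ≠ 0) :
    (∏' k : ℕ, (1 - z * q ^ k)) ≠ 0 := by
  have h2 := Complex.cexp_tsum_eq_tprod (f := fun k => 1 - z * q ^ k)
      (fun k => h k) (log_summable z hq)
  rw [← h2]
  exact Complex.exp_ne_zero _

end CauchyAux

open CauchyAux in
/-- Cauchy's identity: for `|q| < 1` and `|t| < 1`,
`Σ_{n≥0} ((a;q)_n / (q;q)_n) tⁿ = (at;q)∞ / (t;q)∞`. -/
theorem cauchy_identity (a q t : ℂ) (hq : ‖q‖ < 1) (ht : ‖t‖ < 1) :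
    ∑' n : ℕ,
        ((∏ k ∈ range n, (1 - a * q ^ k)) / (∏ k ∈ range n, (1 - q * q ^ k))) * t ^ n =
      (∏' k : ℕ, (1 - a * t * q ^ k)) / (∏' k : ℕ, (1 - t * q ^ k)) := by
  have hmQ : Multipliable (fun k : ℕ => 1 - t * q ^ k) := multipliable_aux t hq
  have hmP : Multipliable (fun k : ℕ => 1 - a * t * q ^ k) := by
    have := multipliable_aux (a * t) hq
    apply this.congr
    intro k; ring_nf
  have hQne : (∏' k : ℕ, (1 - t * q ^ k)) ≠ 0 := by
    apply tprod_ne_zero t hq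
    intro k
    apply one_sub_ne_zero
    have : t * q ^ k = q ^ k * t := by ring
    rw [this]
    exact norm_pow_mul_lt_one hq ht k
  have hT1 : Tendsto (fun n => S a q t * ∏ k ∈ range n, (1 - t * q ^ k)) atTop
      (𝓝 (S a q t * ∏' k : ℕ, (1 - t * q ^ k))) :=
    tendsto_const_nhds.mul hmQ.hasProd.tendsto_prod_nat
  have hT2 : Tendsto (fun n => S a q t * ∏ k ∈ range n, (1 - t * q ^ k)) atTop
      (𝓝 ((∏' k : ℕ, (1 - a * t * q ^ k)) * 1)) := by
    apply Tendsto.congr (fun n => (key_induction a hq ht n).symm)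
    exact hmP.hasProd.tendsto_prod_nat.mul (tendsto_S_one a hq ht)
  have hEq : S a q t * (∏' k : ℕ, (1 - t * q ^ k)) = ∏' k : ℕ, (1 - a * t * q ^ k) := by
    have := tendsto_nhds_unique hT1 hT2
    simpa using this
  have hLHS : (∑' n : ℕ,
      ((∏ k ∈ range n, (1 - a * q ^ k)) / (∏ k ∈ range n, (1 - q * q ^ k))) * t ^ n) =
      S a q t := rfl
  rw [hLHS, eq_div_iff hQne]
  exact hEq
end

section
/- The crank generating function admits the decomposition (q;q)_∞ / ((zq;q)_∞ (z^{-1}q;q)_∞) = (1-q) Σ_{n≥0} z^n q^n / (q;q)_n + Σ_{n≥1} z^{-n} q^n / ((q²;q)_{n-1} (zq^{n+1};q)_∞), as formal power series in q. -/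
open Finset PowerSeries

namespace CrankAux
noncomputable section

abbrev R : Type := PowerSeries L

/-- congruence mod X^M -/
def MD (M : ℕ) (f g : R) : Prop := (X : R) ^ M ∣ f - g

lemma MD.refl {M : ℕ} (f : R) : MD M f f := by simp [MD]

lemma MD.of_eq {M : ℕ} {f g : R} (h : f = g) : MD M f g := by simp [MD, h]

lemma MD.symm {M : ℕ} {f g : R} (h : MD M f g) : MD M g f := by
  simpa [MD] using (dvd_neg.2 h)

lemma MD.trans {M : ℕ} {f g h : R} (h1 : MD M f g) (h2 : MD M g h) : MD M f h := by
  have := dvd_add h1 h2; simpa [MD] using this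

lemma MD.add {M : ℕ} {a b c d : R} (h1 : MD M a b) (h2 : MD M c d) : MD M (a+c) (b+d) := by
  have := dvd_add h1 h2
  simpa [MD, sub_add_sub_comm] using this

lemma MD.mul_left {M : ℕ} (c : R) {a b : R} (h : MD M a b) : MD M (c*a) (c*b) := by
  simpa [MD, mul_sub] using Dvd.dvd.mul_left h c

lemma MD.mul_right {M : ℕ} (c : R) {a b : R} (h : MD M a b) : MD M (a*c) (b*c) := by
  simpa [MD, sub_mul] using Dvd.dvd.mul_right h c

lemma MD.mul {M : ℕ} {a b c d : R} (h1 : MD M a b) (h2 : MD M c d) :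
    MD M (a*c) (b*d) := (h1.mul_right c).trans (h2.mul_left b)

lemma MD.sum {M : ℕ} {s : Finset ℕ} {f g : ℕ → R}
    (h : ∀ i ∈ s, MD M (f i) (g i)) : MD M (∑ i ∈ s, f i) (∑ i ∈ s, g i) := by
  unfold MD at *
  rw [← Finset.sum_sub_distrib]
  exact Finset.dvd_sum h

lemma MD.prod {M : ℕ} {s : Finset ℕ} {f g : ℕ → R}
    (h : ∀ i ∈ s, MD M (f i) (g i)) : MD M (∏ i ∈ s, f i) (∏ i ∈ s, g i) := by
  classical
  induction s using Finset.induction_on with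
  | empty => exact MD.refl _
  | @insert a s hx ih =>
    rw [Finset.prod_insert hx, Finset.prod_insert hx]
    exact (h a (mem_insert_self a s)).mul (ih fun i hi => h i (mem_insert_of_mem hi))

lemma MD.add_dvd {M : ℕ} {a b e : R} (h : MD M a b) (he : (X:R)^M ∣ e) :
    MD M a (b + e) := by
  unfold MD at *
  have := dvd_sub h he
  simpa [sub_sub] using this

/-- units -/
lemma isUnit_one_sub (w : L) {k : ℕ} (hk : 1 ≤ k) : IsUnit (1 - C w * X ^ k : R) := by
  rw [PowerSeries.isUnit_iff_constantCoeff]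
  have : constantCoeff ((X:R) ^ k) = 0 := by
    rw [map_pow, constantCoeff_X, zero_pow (by omega)]
  simp [this]

lemma isUnit_prod (w : L) (s : Finset ℕ) (hs : ∀ k ∈ s, 1 ≤ k) :
    IsUnit (∏ k ∈ s, (1 - C w * X ^ k : R)) := by
  rw [PowerSeries.isUnit_iff_constantCoeff, map_prod]
  have : ∀ k ∈ s, constantCoeff (1 - C w * X ^ k : R) = 1 := by
    intro k hk
    have h1 := hs k hk
    have : constantCoeff ((X:R) ^ k) = 0 := by
      rw [map_pow, constantCoeff_X, zero_pow (by omega : k ≠ 0)]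
    simp [this]
  rw [Finset.prod_congr rfl this, Finset.prod_const_one]
  exact isUnit_one

lemma isUnit_prodX (s : Finset ℕ) (hs : ∀ k ∈ s, 1 ≤ k) :
    IsUnit (∏ k ∈ s, (1 - (X:R) ^ k)) := by
  have : ∀ k ∈ s, (1 - (X:R) ^ k) = 1 - C 1 * X ^ k := by intro k _; simp
  rw [Finset.prod_congr rfl this]
  exact isUnit_prod 1 s hs

lemma inv_cong {M : ℕ} {u : R} (hu : IsUnit u) (h : MD M u 1) :
    MD M (Ring.inverse u) 1 := by
  have : Ring.inverse u - 1 = Ring.inverse u * (1 - u) := by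
    rw [mul_sub, mul_one, Ring.inverse_mul_cancel u hu]
  have h2 : (X:R)^M ∣ 1 - u := by
    have := h; unfold MD at this
    simpa [neg_sub] using dvd_neg.2 this
  show (X:R)^M ∣ Ring.inverse u - 1
  rw [this]
  exact h2.mul_left _


/-! q-binomial machinery -/

def pa (α : L) (n : ℕ) : R := ∏ k ∈ Ioc 0 n, (1 - C α * X ^ k)
def pq (n : ℕ) : R := ∏ k ∈ Ioc 0 n, (1 - (X:R) ^ k)
def cc (α β : L) (n : ℕ) : R := pa α n * (C β) ^ n * Ring.inverse (pq n)
def H (α β : L) (N m : ℕ) : R := ∑ n ∈ range (N+1), cc α β n * X ^ (m * n)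

lemma isUnit_pq (n : ℕ) : IsUnit (pq n) :=
  isUnit_prodX _ (fun k hk => (mem_Ioc.1 hk).1)

lemma pq_succ (n : ℕ) : pq (n+1) = pq n * (1 - (X:R)^(n+1)) := by
  rw [pq, pq, Finset.prod_Ioc_succ_top (Nat.zero_le _)]

lemma pa_succ (α : L) (n : ℕ) : pa α (n+1) = pa α n * (1 - C α * (X:R)^(n+1)) := by
  rw [pa, pa, Finset.prod_Ioc_succ_top (Nat.zero_le _)]

lemma inv_pq_mul (n : ℕ) :
    Ring.inverse (pq (n+1)) * (1 - (X:R)^(n+1)) = Ring.inverse (pq n) := by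
  have hu : IsUnit (1 - (X:R)^(n+1)) := by
    simpa using isUnit_one_sub (1 : L) (Nat.le_add_left 1 n)
  rw [pq_succ, Ring.mul_inverse_rev, mul_assoc, mul_comm (Ring.inverse (pq n)),
    ← mul_assoc, Ring.inverse_mul_cancel _ hu, one_mul]

lemma cc_rel (α β : L) (n : ℕ) :
    cc α β (n+1) * (1 - (X:R)^(n+1)) = C β * ((1 - C α * X^(n+1)) * cc α β n) := by
  rw [cc, cc, pa_succ, mul_assoc, mul_assoc, inv_pq_mul]
  ring

lemma step (α β : L) (N m : ℕ) :
    (1 - C β * X ^ m) * H α β N m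
      = (1 - C (α * β) * X ^ (m + 1)) * H α β N (m + 1)
        + C β * cc α β N * X ^ (m * (N + 1)) * (C α * X ^ (N + 1) - 1) := by
  have key : (1 - C β * X ^ m) * H α β N m
      - (1 - C (α * β) * X ^ (m + 1)) * H α β N (m + 1)
      = C β * cc α β N * X ^ (m * (N + 1)) * (C α * X ^ (N + 1) - 1) := by
    rw [H, H, Finset.mul_sum, Finset.mul_sum, ← Finset.sum_sub_distrib]
    have hterm : ∀ n ∈ range N,
        ((1 - C β * X ^ m) * (cc α β (n+1) * X ^ (m * (n+1)))
          - (1 - C (α * β) * X ^ (m + 1)) * (cc α β (n+1) * X ^ ((m + 1) * (n+1))))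
        = (C β * cc α β (n+1) * X ^ (m * (n+2)) * (C α * X ^ (n+2) - 1))
          - (C β * cc α β n * X ^ (m * (n+1)) * (C α * X ^ (n+1) - 1)) := by
      intro n _
      have rel := cc_rel α β n
      rw [map_mul]
      linear_combination (X:R) ^ (m * (n+1)) * rel
    rw [Finset.sum_range_succ']
    rw [Finset.sum_congr rfl hterm, Finset.sum_range_sub
      (fun n => C β * cc α β n * X ^ (m * (n+1)) * (C α * X ^ (n+1) - 1))]
    rw [map_mul]
    ring
  linear_combination key


def G (α β : L) (m : ℕ) : R := ∏ k ∈ Ioc 1 m, (1 - C (α*β) * X ^ k)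
def I (β : L) (m : ℕ) : R := Ring.inverse (∏ k ∈ Ioc 0 m, (1 - C β * X ^ k))

lemma Hcong (α β : L) (N : ℕ) : ∀ m, m ≤ N →
    MD (N+1) (H α β N 1) (G α β (m+1) * I β m * H α β N (m+1)) := by
  intro m
  induction m with
  | zero =>
    intro _
    have : G α β 1 = 1 := by rw [G]; simp
    rw [this, I]
    simp only [Ioc_self, Finset.prod_empty, Ring.inverse_one, one_mul, mul_one]
    exact MD.refl _
  | succ m ih =>
    intro hm
    have ih' := ih (Nat.le_of_succ_le hm)
    have hu : IsUnit (1 - C β * (X:R) ^ (m+1)) := isUnit_one_sub β (Nat.le_add_left 1 m)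
    have hstep : H α β N (m+1)
        = Ring.inverse (1 - C β * (X:R) ^ (m+1)) *
            ((1 - C (α * β) * X ^ (m + 2)) * H α β N (m + 2)
              + C β * cc α β N * X ^ ((m+1) * (N + 1)) * (C α * X ^ (N + 1) - 1)) := by
      have h2 := step α β N (m+1)
      rw [← h2, ← mul_assoc, Ring.inverse_mul_cancel _ hu, one_mul]
    have hG : G α β (m+2) = G α β (m+1) * (1 - C (α*β) * X ^ (m+2)) := by
      rw [G, G, Finset.prod_Ioc_succ_top (Nat.le_add_left 1 m)]
    have hI : I β (m+1) = I β m * Ring.inverse (1 - C β * (X:R) ^ (m+1)) := by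
      rw [I, I, Finset.prod_Ioc_succ_top (Nat.zero_le _), Ring.mul_inverse_rev, mul_comm]
    have hdvd : (X:R)^(N+1) ∣ G α β (m+1) * I β m *
        (Ring.inverse (1 - C β * (X:R) ^ (m+1)) *
          (C β * cc α β N * X ^ ((m+1) * (N + 1)) * (C α * X ^ (N + 1) - 1))) := by
      have h1 : (X:R)^(N+1) ∣ (X:R) ^ ((m+1) * (N + 1)) :=
        pow_dvd_pow X (Nat.le_mul_of_pos_left _ (Nat.succ_pos m))
      exact Dvd.dvd.mul_left (Dvd.dvd.mul_left ((h1.mul_left _).mul_right _) _) _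
    refine ih'.trans ?_
    have heq : G α β (m+1) * I β m * H α β N (m+1)
        = G α β (m+2) * I β (m+1) * H α β N (m+2)
          + G α β (m+1) * I β m *
            (Ring.inverse (1 - C β * (X:R) ^ (m+1)) *
              (C β * cc α β N * X ^ ((m+1) * (N + 1)) * (C α * X ^ (N + 1) - 1))) := by
      rw [hstep, hG, hI]; ring
    rw [heq]
    exact ((MD.refl _).add_dvd hdvd).symm

lemma H_top (α β : L) (N : ℕ) : MD (N+1) (H α β N (N+1)) 1 := by
  have h0 : cc α β 0 * (X:R) ^ ((N+1) * 0) = 1 := by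
    rw [cc, pa, pq]
    simp [Ring.inverse_one]
  show (X:R)^(N+1) ∣ H α β N (N+1) - 1
  rw [H, Finset.sum_range_succ', h0, add_sub_cancel_right]
  refine Finset.dvd_sum fun n _ => ?_
  have h1 : (X:R)^(N+1) ∣ (X:R) ^ ((N+1) * (n+1)) :=
    pow_dvd_pow X (Nat.le_mul_of_pos_right _ (Nat.succ_pos n))
  exact h1.mul_left _

lemma qbt (α β : L) (N : ℕ) :
    MD (N+1) (∑ n ∈ range (N+1), pa α n * C β ^ n * X ^ n * Ring.inverse (pq n))
      ((∏ k ∈ Ioc 1 N, (1 - C (α*β) * X ^ k)) *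
        Ring.inverse (∏ k ∈ Ioc 0 N, (1 - C β * X ^ k))) := by
  have hH : H α β N 1 = ∑ n ∈ range (N+1), pa α n * C β ^ n * X ^ n * Ring.inverse (pq n) := by
    rw [H]
    refine Finset.sum_congr rfl fun n _ => ?_
    rw [cc, one_mul]
    ring
  have h1 := (Hcong α β N N (le_refl N)).trans
    (((MD.refl (G α β (N+1) * I β N)).mul (H_top α β N)))
  rw [hH] at h1
  refine h1.trans ?_
  rw [mul_one]
  refine MD.mul_right _ ?_
  show (X:R)^(N+1) ∣ G α β (N+1) - ∏ k ∈ Ioc 1 N, (1 - C (α*β) * X ^ k)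
  cases N with
  | zero => simp [G]
  | succ N =>
  have hG : G α β (N+1+1) = (∏ k ∈ Ioc 1 (N+1), (1 - C (α*β) * X ^ k)) * (1 - C (α*β) * X ^ (N+1+1)) := by
    rw [G, Finset.prod_Ioc_succ_top (Nat.le_add_left 1 N)]
  rw [hG]
  have : (∏ k ∈ Ioc 1 (N+1), (1 - C (α*β) * X ^ k)) * (1 - C (α*β) * X ^ (N+1+1))
      - ∏ k ∈ Ioc 1 (N+1), (1 - C (α*β) * X ^ k)
      = (X:R)^(N+1+1) * (-(C (α*β)) * ∏ k ∈ Ioc 1 (N+1), (1 - C (α*β) * X ^ k)) := by ring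
  rw [this]
  exact Dvd.intro _ rfl


lemma coeff_eq {M : ℕ} {f g : R} (h : MD M f g) {n : ℕ} (hn : n < M) :
    PowerSeries.coeff n f = PowerSeries.coeff n g := by
  have := (PowerSeries.X_pow_dvd_iff.mp h) n hn
  rwa [map_sub, sub_eq_zero] at this

lemma hZZi : Z * Zi = 1 := by
  rw [Z, Zi, ← LaurentPolynomial.T_add]
  norm_num [LaurentPolynomial.T_zero]

lemma euler (N : ℕ) :
    MD (N+1) (∑ j ∈ range (N + 1), C (Z ^ j) * X ^ j * Ring.inverse (pq j))
      (Ring.inverse (∏ k ∈ Ioc 0 N, (1 - C Z * X ^ k))) := by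
  have e0 := qbt 0 Z N
  have h1 : ∀ n : ℕ, pa 0 n * C Z ^ n * (X:R) ^ n * Ring.inverse (pq n)
      = C (Z ^ n) * X ^ n * Ring.inverse (pq n) := by
    intro n
    rw [pa, map_pow]
    simp
  have h2 : (∏ k ∈ Ioc 1 N, (1 - C ((0:L)*Z) * (X:R) ^ k)) = 1 := by simp
  rw [Finset.sum_congr rfl (fun n _ => h1 n), h2, one_mul] at e0
  exact e0

lemma term_cong (N j : ℕ) (hj1 : 1 ≤ j) (hjN : j ≤ N) :
    MD (N+1)
      (C (Zi ^ j) * X ^ j *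
        Ring.inverse ((∏ k ∈ Ioc 1 j, (1 - (X:R) ^ k)) * ∏ k ∈ Ioc j (j + N), (1 - C Z * X ^ k)))
      ((1 - X) * (pa Z j * C Zi ^ j * X ^ j * Ring.inverse (pq j)) *
        Ring.inverse (∏ k ∈ Ioc 0 N, (1 - C Z * X ^ k))) := by
  set A : R := ∏ k ∈ Ioc 1 j, (1 - (X:R) ^ k) with hA
  set B1 : R := ∏ k ∈ Ioc j N, (1 - C Z * X ^ k) with hB1
  set B2 : R := ∏ k ∈ Ioc N (j + N), (1 - C Z * X ^ k) with hB2
  set Pz : R := ∏ k ∈ Ioc 0 N, (1 - C Z * X ^ k) with hPz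
  have hAu : IsUnit A := isUnit_prodX _ (fun k hk => le_of_lt (mem_Ioc.1 hk).1)
  have hB1u : IsUnit B1 := isUnit_prod _ _ (fun k hk => le_trans hj1 (le_of_lt (mem_Ioc.1 hk).1))
  have hB2u : IsUnit B2 := isUnit_prod _ _ (fun k hk => by
    have := (mem_Ioc.1 hk).1; omega)
  have hXu : IsUnit (1 - (X:R)) := by
    simpa using isUnit_one_sub (1 : L) (le_refl 1)
  have hZpu : IsUnit (pa Z j) := isUnit_prod _ _ (fun k hk => (mem_Ioc.1 hk).1)
  -- B = B1 * B2
  have hB : (∏ k ∈ Ioc j (j + N), (1 - C Z * X ^ k)) = B1 * B2 := by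
    rw [hB1, hB2, Finset.prod_Ioc_consecutive _ hjN (Nat.le_add_left N j)]
  -- pq j = (1 - X) * A
  have hpq : pq j = (1 - (X:R)) * A := by
    rw [pq, hA, ← Finset.prod_Ioc_consecutive _ (Nat.zero_le 1) hj1,
      Nat.Ioc_succ_singleton, Finset.prod_singleton, pow_one]
  -- (1-X) * inv (pq j) = inv A
  have hinvA : Ring.inverse A = (1 - (X:R)) * Ring.inverse (pq j) := by
    rw [hpq, Ring.mul_inverse_rev, mul_comm (Ring.inverse A), ← mul_assoc,
      Ring.mul_inverse_cancel _ hXu, one_mul]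
  -- pa Z j * B1 = Pz
  have hsplit : pa Z j * B1 = Pz := by
    rw [pa, hB1, hPz, Finset.prod_Ioc_consecutive _ (Nat.zero_le j) hjN]
  have hinvB1 : Ring.inverse B1 = pa Z j * Ring.inverse Pz := by
    rw [← hsplit, Ring.mul_inverse_rev, mul_comm (Ring.inverse B1), ← mul_assoc,
      Ring.mul_inverse_cancel _ hZpu, one_mul]
  -- inv B2 ≡ 1
  have hB2cong : MD (N+1) (Ring.inverse B2) 1 := by
    refine inv_cong hB2u ?_
    have : MD (N+1) B2 (∏ k ∈ Ioc N (j+N), 1) := by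
      refine MD.prod fun k hk => ?_
      have hk1 := (mem_Ioc.1 hk).1
      show (X:R)^(N+1) ∣ (1 - C Z * X ^ k) - 1
      have : (1 - C Z * (X:R) ^ k) - 1 = -(C Z * X ^ k) := by ring
      rw [this]
      exact (dvd_neg.2 ((pow_dvd_pow X hk1).mul_left _))
    simpa using this
  -- assemble
  rw [hB, Ring.mul_inverse_rev, Ring.mul_inverse_rev]
  have heq : C (Zi ^ j) * (X:R) ^ j * (Ring.inverse B2 * Ring.inverse B1 * Ring.inverse A)
      = ((1 - X) * (pa Z j * C Zi ^ j * X ^ j * Ring.inverse (pq j)) * Ring.inverse Pz)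
          * Ring.inverse B2 := by
    rw [hinvA, hinvB1, map_pow]
    ring
  rw [heq]
  have := ((MD.refl ((1 - (X:R)) * (pa Z j * C Zi ^ j * X ^ j * Ring.inverse (pq j)) *
      Ring.inverse Pz)).mul hB2cong)
  simpa using this

lemma main (N : ℕ) (hN : 1 ≤ N) :
    MD (N+1)
      ((∏ k ∈ Ioc 0 N, (1 - (X : R) ^ k)) *
        Ring.inverse (∏ k ∈ Ioc 0 N, (1 - C Z * X ^ k)) *
        Ring.inverse (∏ k ∈ Ioc 0 N, (1 - C Zi * X ^ k)))
      ((1 - X) * ∑ j ∈ range (N + 1), C (Z ^ j) * X ^ j * Ring.inverse (pq j) +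
        ∑ j ∈ Ioc 0 N, C (Zi ^ j) * X ^ j *
          Ring.inverse ((∏ k ∈ Ioc 1 j, (1 - (X:R) ^ k)) *
            ∏ k ∈ Ioc j (j + N), (1 - C Z * X ^ k))) := by
  set Pz : R := ∏ k ∈ Ioc 0 N, (1 - C Z * X ^ k) with hPz
  set Pzi : R := ∏ k ∈ Ioc 0 N, (1 - C Zi * X ^ k) with hPzi
  refine MD.symm ?_
  -- first: RHS ≡ (1-X) * inv Pz * (full qbt sum)
  have step1 : MD (N+1)
      ((1 - X) * ∑ j ∈ range (N + 1), C (Z ^ j) * X ^ j * Ring.inverse (pq j) +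
        ∑ j ∈ Ioc 0 N, C (Zi ^ j) * X ^ j *
          Ring.inverse ((∏ k ∈ Ioc 1 j, (1 - (X:R) ^ k)) *
            ∏ k ∈ Ioc j (j + N), (1 - C Z * X ^ k)))
      ((1 - X) * Ring.inverse Pz +
        ∑ j ∈ Ioc 0 N, (1 - X) * (pa Z j * C Zi ^ j * X ^ j * Ring.inverse (pq j)) *
          Ring.inverse Pz) := by
    refine MD.add (MD.mul_left _ (euler N)) (MD.sum fun j hj => ?_)
    exact term_cong N j (mem_Ioc.1 hj).1 (mem_Ioc.1 hj).2
  refine step1.trans ?_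
  -- regroup into single sum
  have regroup : (1 - (X:R)) * Ring.inverse Pz +
      ∑ j ∈ Ioc 0 N, (1 - X) * (pa Z j * C Zi ^ j * X ^ j * Ring.inverse (pq j)) *
        Ring.inverse Pz
      = (1 - X) * Ring.inverse Pz *
          ∑ n ∈ range (N + 1), pa Z n * C Zi ^ n * X ^ n * Ring.inverse (pq n) := by
    have hsplit : ∑ n ∈ range (N + 1), pa Z n * C Zi ^ n * (X:R) ^ n * Ring.inverse (pq n)
        = 1 + ∑ j ∈ Ioc 0 N, pa Z j * C Zi ^ j * X ^ j * Ring.inverse (pq j) := by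
      rw [Finset.range_eq_Ico, Finset.Ico_add_one_right_eq_Icc, Finset.Icc_eq_cons_Ioc (Nat.zero_le N),
        Finset.sum_cons]
      congr 1
      rw [pa, pq]
      simp [Ring.inverse_one]
    rw [hsplit, mul_add, mul_one, Finset.mul_sum]
    refine congrArg (HAdd.hAdd _) ?_
    refine Finset.sum_congr rfl fun j _ => ?_
    ring
  rw [regroup]
  -- apply qbt Z Zi
  have e1 := qbt Z Zi N
  rw [hZZi] at e1
  have h2 : (∏ k ∈ Ioc 1 N, (1 - C 1 * (X:R) ^ k)) = ∏ k ∈ Ioc 1 N, (1 - (X:R) ^ k) := by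
    simp
  rw [h2] at e1
  refine (MD.mul_left ((1 - X) * Ring.inverse Pz) e1).trans ?_
  refine MD.of_eq ?_
  have hq : (∏ k ∈ Ioc 0 N, (1 - (X:R) ^ k))
      = (1 - X) * ∏ k ∈ Ioc 1 N, (1 - (X:R) ^ k) := by
    rw [← Finset.prod_Ioc_consecutive _ (Nat.zero_le 1) hN,
      Nat.Ioc_succ_singleton, Finset.prod_singleton, pow_one]
  rw [hq]
  ring

end
end CrankAux

/-- The decomposition
`(q;q)∞ / ((zq;q)∞ (z⁻¹q;q)∞)
  = (1-q) Σ_{n≥0} zⁿqⁿ/(q;q)_n + Σ_{n≥1} z⁻ⁿqⁿ/((q²;q)_{n-1} (zq^{n+1};q)∞)`,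
as formal power series in `q` (coefficients of `qⁿ` computed with any
truncation `N ≥ n` of the infinite products and sums). -/
theorem crank_generating_function_decomposition :
    ∀ N n : ℕ, n ≤ N →
      PowerSeries.coeff (R := L) n
        ((∏ k ∈ Icc 1 N, (1 - (X : PowerSeries L) ^ k)) *
          Ring.inverse (∏ k ∈ Icc 1 N, (1 - C (R := L) Z * X ^ k)) *
          Ring.inverse (∏ k ∈ Icc 1 N, (1 - C (R := L) Zi * X ^ k))) =
      PowerSeries.coeff (R := L) n
        ((1 - X) *
            ∑ j ∈ range (N + 1),
              C (R := L) (Z ^ j) * X ^ j * Ring.inverse (∏ k ∈ Icc 1 j, (1 - (X : PowerSeries L) ^ k)) +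
          ∑ j ∈ Icc 1 N,
            C (R := L) (Zi ^ j) * X ^ j *
              Ring.inverse
                ((∏ k ∈ Icc 2 j, (1 - (X : PowerSeries L) ^ k)) *
                  ∏ k ∈ Icc (j + 1) (j + N), (1 - C (R := L) Z * X ^ k))) := by
  intro N n hn
  have e1 : ∀ b : ℕ, Icc 1 b = Ioc 0 b := fun b => Finset.Icc_add_one_left_eq_Ioc 0 b
  have e2 : ∀ b : ℕ, Icc 2 b = Ioc 1 b := fun b => Finset.Icc_add_one_left_eq_Ioc 1 b
  have e3 : ∀ a b : ℕ, Icc (a+1) (a+b) = Ioc a (a+b) := fun a b => Finset.Icc_add_one_left_eq_Ioc a (a+b)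
  simp only [e1, e2, e3]
  cases N with
  | zero =>
    have hn0 : n = 0 := Nat.le_zero.mp hn
    subst hn0
    simp [Ring.inverse_one]
  | succ N =>
    have h := CrankAux.main (N+1) (Nat.le_add_left 1 N)
    simp only [CrankAux.pq] at h
    exact CrankAux.coeff_eq h (by omega)
end
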